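/- Let P be a program, Y an interpretation, and H, B ⊆ U alphabets. If there exists a program R ∈ C_{⟨H,B⟩} (all head atoms in H, all body atoms in B) such that Y is an answer set of P ∪ R, then Y is an H-total model of P, i.e., Y ⊨ P and every Z ⊂ Y with Z ⊨ P^Y satisfies Z∩H ⊂ Y∩H. -/

import Mathlib

structure Rule (α : Type*) where
  head : Finset α
  pbody : Finset α
  nbody : Finset α
deriving DecidableEq

abbrev Program (α : Type*) := Finset (Rule α)

variable {α : Type*} [DecidableEq α]

/-- An interpretation `Y` satisfies a rule. -/
def satRule (Y : Finset α) (r : Rule α) : Prop :=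
  r.pbody ⊆ Y → r.nbody ∩ Y = ∅ → (r.head ∩ Y).Nonempty

/-- `Y` is a model of the program `P`. -/
def satProg (Y : Finset α) (P : Program α) : Prop := ∀ r ∈ P, satRule Y r

/-- The Gelfond–Lifschitz reduct `P^Y`. -/
def reduct (P : Program α) (Y : Finset α) : Program α :=
  (P.filter (fun r => r.nbody ∩ Y = ∅)).image (fun r => ⟨r.head, r.pbody, ∅⟩)

/-- `Y` is an answer set of `P`: a minimal model of `P^Y`. -/
def isAS (P : Program α) (Y : Finset α) : Prop :=
  satProg Y (reduct P Y) ∧ ∀ Z, Z ⊂ Y → ¬ satProg Z (reduct P Y)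

def heads (P : Program α) : Finset α := P.biUnion Rule.head
def bodies (P : Program α) : Finset α := P.biUnion (fun r => r.pbody ∪ r.nbody)

/-- A positive program: no default negation. -/
def Positive (P : Program α) : Prop := ∀ r ∈ P, r.nbody = ∅

/-- A unary program: only facts `a ←` and rules `a ← b`. -/
def Unary (P : Program α) : Prop :=
  ∀ r ∈ P, r.nbody = ∅ ∧ r.head.card = 1 ∧ r.pbody.card ≤ 1

/-- Membership in the class `C_⟨H,B⟩`. -/
def inClass (H B : Finset α) (P : Program α) : Prop := heads P ⊆ H ∧ bodies P ⊆ B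

/-- `V ⪯_H^B Z`. -/
def preceq (H B V Z : Finset α) : Prop := V ∩ H ⊆ Z ∩ H ∧ Z ∩ B ⊆ V ∩ B

/-- `V ≺_H^B Z`. -/
def prec (H B V Z : Finset α) : Prop := preceq H B V Z ∧ V ∩ (H ∪ B) ≠ Z ∩ (H ∪ B)

/-- `Y` is an `H`-total model of `P`. -/
def Htotal (H : Finset α) (P : Program α) (Y : Finset α) : Prop :=
  satProg Y P ∧ ∀ Z, Z ⊂ Y → satProg Z (reduct P Y) → Z ∩ H ⊂ Y ∩ H

/-- The containment `P ⊆_⟨H,B⟩ Q`. -/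
def containsHB (H B : Finset α) (P Q : Program α) : Prop :=
  ∀ R : Program α, inClass H B R → ∀ Y, isAS (P ∪ R) Y → isAS (Q ∪ R) Y

/-- The equivalence `P ≡_⟨H,B⟩ Q`. -/
def equivHB (H B : Finset α) (P Q : Program α) : Prop :=
  ∀ R : Program α, inClass H B R → ∀ Y, isAS (P ∪ R) Y ↔ isAS (Q ∪ R) Y

/-- A witness against `P ⊆_⟨H,B⟩ Q`. -/
def Witness (H B : Finset α) (P Q : Program α) (X Y : Finset α) : Prop :=
  X ⊆ Y ∧ Htotal H P Y ∧
    (satProg Y Q → X ⊂ Y ∧ satProg X (reduct Q Y) ∧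
      ∀ X', preceq H B X X' → X' ⊂ Y → ¬ satProg X' (reduct P Y))

/-- `(X,Y)` is `⪯_H^B`-maximal for `P`. -/
def maximalHB (H B : Finset α) (P : Program α) (X Y : Finset α) : Prop :=
  satProg X (reduct P Y) ∧ ∀ X', prec H B X X' → X' ⊂ Y → ¬ satProg X' (reduct P Y)

/-- `(X,Y)` is an `⟨H,B⟩`-model of `P`. -/
def HBmodel (H B : Finset α) (P : Program α) (X Y : Finset α) : Prop :=
  X ⊆ Y ∧ Htotal H P Y ∧
    (X ⊂ Y → ∃ X', X' ⊂ Y ∧ X' ∩ (H ∪ B) = X ∧ maximalHB H B P X' Y)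

/-! If `Z ⊊ Y` agreed with `Y` on `H` and modelled `P^Y`, it would also model `R^Y`: every rule of
`R^Y` whose body holds in `Z` fires in `Y`, and the atom it derives lies in `H`, hence in `Z`. So `Z`
would model `(P ∪ R)^Y`, against the minimality of the answer set `Y`. -/

theorem mem_reduct {P : Program α} {Y : Finset α} {r : Rule α} :
    r ∈ reduct P Y ↔ ∃ s ∈ P, s.nbody ∩ Y = ∅ ∧ ⟨s.head, s.pbody, ∅⟩ = r := by
  simp only [reduct, Finset.mem_image, Finset.mem_filter, and_assoc]

theorem reduct_union (P Q : Program α) (Y : Finset α) :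
    reduct (P ∪ Q) Y = reduct P Y ∪ reduct Q Y := by
  simp only [reduct, Finset.filter_union, Finset.image_union]

theorem satProg_union_iff {Y : Finset α} {P Q : Program α} :
    satProg Y (P ∪ Q) ↔ satProg Y P ∧ satProg Y Q := by
  simp only [satProg, Finset.mem_union, or_imp, forall_and]

theorem positive_reduct (P : Program α) (Y : Finset α) : Positive (reduct P Y) := by
  rintro r hr
  obtain ⟨s, -, -, rfl⟩ := mem_reduct.mp hr
  rfl

theorem heads_reduct_subset (P : Program α) (Y : Finset α) : heads (reduct P Y) ⊆ heads P := by
  intro a ha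
  obtain ⟨r, hr, har⟩ := Finset.mem_biUnion.mp ha
  obtain ⟨s, hs, -, rfl⟩ := mem_reduct.mp hr
  exact Finset.mem_biUnion.mpr ⟨s, hs, har⟩

theorem satProg_of_satProg_reduct {P : Program α} {Y : Finset α}
    (hY : satProg Y (reduct P Y)) : satProg Y P := fun r hr hp hn =>
  hY ⟨r.head, r.pbody, ∅⟩ (mem_reduct.mpr ⟨r, hr, hn, rfl⟩) hp (Finset.empty_inter Y)

theorem satProg_of_subset_of_inter_subset {Q : Program α} {H Y Z : Finset α}
    (hQ : Positive Q) (hH : heads Q ⊆ H) (hY : satProg Y Q) (hZY : Z ⊆ Y) (hYZ : Y ∩ H ⊆ Z) :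
    satProg Z Q := by
  intro r hr hp _
  obtain ⟨a, ha⟩ := hY r hr (hp.trans hZY) (by rw [hQ r hr, Finset.empty_inter])
  rw [Finset.mem_inter] at ha
  have haH : a ∈ H := hH (Finset.mem_biUnion.mpr ⟨r, hr, ha.1⟩)
  exact ⟨a, Finset.mem_inter.mpr ⟨ha.1, hYZ (Finset.mem_inter.mpr ⟨ha.2, haH⟩)⟩⟩

theorem answer_set_extension_Htotal (P : Program α) (Y H B : Finset α)
    (h : ∃ R : Program α, inClass H B R ∧ isAS (P ∪ R) Y) :
    Htotal H P Y := by
  obtain ⟨R, ⟨hR, -⟩, hY, hmin⟩ := h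
  rw [reduct_union, satProg_union_iff] at hY
  refine ⟨satProg_of_satProg_reduct hY.1, fun Z hZ hZP => ?_⟩
  refine (Finset.inter_subset_inter_right hZ.subset).ssubset_of_ne fun heq => hmin Z hZ ?_
  rw [reduct_union, satProg_union_iff]
  exact ⟨hZP, satProg_of_subset_of_inter_subset (positive_reduct R Y)
    ((heads_reduct_subset R Y).trans hR) hY.2 hZ.subset (heq ▸ Finset.inter_subset_left)⟩
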